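/- Let L₉ be the 3-dimensional complex algebra with basis e₁, e₂, e₃ and nonzero products e₁e₃ = e₁ + e₂, e₃e₃ = e₁. For a single variable (m = 1), every polynomial function f : L₉ → ℂ invariant under all automorphisms of L₉ is a polynomial in the third coordinate z (with respect to the basis e₁,e₂,e₃); that is, the invariant algebra I₁(L₉) = ℂ[x,y,z]^{Aut(L₉)} equals ℂ[z]. -/

import Mathlib

/-- Multiplication of `L₉` on `ℂ³`: nonzero products `e₁e₃ = e₁ + e₂`, `e₃e₃ = e₁`. -/
def mulL9 (a b : Fin 3 → ℂ) : Fin 3 → ℂ :=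
  ![(a 0 + a 2) * b 2, a 0 * b 2, 0]

/-!
Every vector with `z = 0` is a product `b e₃`, so an automorphism `g` maps the plane `z = 0`
into itself and hence `z ∘ g = c z` with `c = z (g e₃)`; applying `g` to `(e₁ + e₂) e₃ = e₁ + e₂`
forces `c = 1`. Thus automorphisms preserve `z`, and polynomials in `z` are invariant.
Conversely, the automorphisms of Theorem 4.2 move `(0, 0, t)` to any point `a` with
`z(a) ≠ 0` and `x(a) + z(a) ≠ 0`, so an invariant `f` agrees with `f(0, 0, z)` off the zero set of
`z (x + z)`, hence everywhere.
-/

open MvPolynomial Matrix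

theorem MvPolynomial.eq_zero_of_eval_eq_zero_of_eval_ne_zero {R σ : Type*} [CommRing R]
    [IsDomain R] [Infinite R] {F G : MvPolynomial σ R} (hG : G ≠ 0)
    (h : ∀ a, eval a G ≠ 0 → eval a F = 0) : F = 0 := by
  have hFG : F * G = 0 := MvPolynomial.funext fun a => by
    by_cases hGa : eval a G = 0
    · simp [hGa]
    · simp [h a hGa]
  exact (mul_eq_zero.mp hFG).resolve_right hG

theorem MvPolynomial.eval_polynomial_aeval_X {R σ : Type*} [CommRing R] (i : σ)
    (q : Polynomial R) (a : σ → R) :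
    eval a (Polynomial.aeval (X i : MvPolynomial σ R) q) = q.eval (a i) := by
  change aeval a _ = _
  rw [← Polynomial.aeval_algHom_apply, aeval_X, Polynomial.coe_aeval_eq_eval]

theorem MvPolynomial.polynomial_eval_aeval {R σ : Type*} [CommRing R] (v : σ → Polynomial R)
    (f : MvPolynomial σ R) (t : R) :
    (aeval v f).eval t = eval (fun i => (v i).eval t) f := by
  rw [← Polynomial.coe_aeval_eq_eval, comp_aeval_apply]
  simp [Polynomial.coe_aeval_eq_eval]

lemma mulL9_apply_two (a b : Fin 3 → ℂ) : mulL9 a b 2 = 0 := rfl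

lemma mulL9_e3_of_apply_two_eq_zero {a : Fin 3 → ℂ} (ha : a 2 = 0) :
    mulL9 ![a 1, 0, a 0 - a 1] ![0, 0, 1] = a := by
  funext i; fin_cases i <;> simp [mulL9, ha]

lemma apply_two_of_map_mulL9 {g : (Fin 3 → ℂ) →ₗ[ℂ] (Fin 3 → ℂ)}
    (hg : ∀ x y, g (mulL9 x y) = mulL9 (g x) (g y)) (a : Fin 3 → ℂ) :
    g a 2 = a 2 * g ![0, 0, 1] 2 := by
  have hb : (a - a 2 • ![0, 0, 1] : Fin 3 → ℂ) 2 = 0 := by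
    simp only [Pi.sub_apply, Pi.smul_apply, smul_eq_mul]
    simp
  calc g a 2 = g (mulL9 _ ![0, 0, 1] + a 2 • ![0, 0, 1]) 2 := by
        rw [mulL9_e3_of_apply_two_eq_zero hb, sub_add_cancel]
    _ = a 2 * g ![0, 0, 1] 2 := by
      rw [map_add, map_smul, hg, Pi.add_apply, mulL9_apply_two, zero_add, Pi.smul_apply,
        smul_eq_mul]

lemma apply_two_e3_of_map_mulL9 {g : (Fin 3 → ℂ) →ₗ[ℂ] (Fin 3 → ℂ)}
    (hg : ∀ x y, g (mulL9 x y) = mulL9 (g x) (g y)) (hinj : Function.Injective g) :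
    g ![0, 0, 1] 2 = 1 := by
  have hfix : mulL9 ![1, 1, 0] ![0, 0, 1] = ![1, 1, 0] := by
    funext i; fin_cases i <;> simp [mulL9]
  have hw2 : g ![1, 1, 0] 2 = 0 := by simpa using apply_two_of_map_mulL9 hg ![1, 1, 0]
  have hw0 : g ![1, 1, 0] 0 = g ![1, 1, 0] 0 * g ![0, 0, 1] 2 := by
    conv_lhs => rw [← hfix, hg]
    simp [mulL9, hw2]
  have hw1 : g ![1, 1, 0] 1 = g ![1, 1, 0] 0 * g ![0, 0, 1] 2 := by
    conv_lhs => rw [← hfix, hg]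
    simp [mulL9]
  have hne : g ![1, 1, 0] 0 ≠ 0 := by
    intro h0
    have hzero : g ![1, 1, 0] = g 0 := by
      funext i; fin_cases i <;> simp [hw1, h0, hw2]
    simpa using congrFun (hinj hzero) 0
  exact (mul_eq_left₀ hne).mp hw0.symm

/-- The automorphism matrices of Theorem 4.2, with `α = α₃` and `β = α₆`. -/
def autMatrixL9 (α β : ℂ) : Matrix (Fin 3) (Fin 3) ℂ :=
  !![1 + α, 0, α; α, 1, β; 0, 0, 1]

lemma autMatrixL9_mulVec (α β : ℂ) (a : Fin 3 → ℂ) :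
    autMatrixL9 α β *ᵥ a = ![(1 + α) * a 0 + α * a 2, α * a 0 + a 1 + β * a 2, a 2] := by
  funext i; fin_cases i <;> simp [autMatrixL9, vecHead, vecTail, add_assoc]

lemma det_autMatrixL9 (α β : ℂ) : (autMatrixL9 α β).det = 1 + α := by
  simp [autMatrixL9, det_fin_three]

lemma bijective_autMatrixL9_mulVec {α : ℂ} (β : ℂ) (hα : 1 + α ≠ 0) :
    Function.Bijective (autMatrixL9 α β).mulVec := by
  have hunit : IsUnit (autMatrixL9 α β) := by
    rw [isUnit_iff_isUnit_det, det_autMatrixL9]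
    exact hα.isUnit
  exact ⟨mulVec_injective_iff_isUnit.mpr hunit, mulVec_surjective_iff_isUnit.mpr hunit⟩

lemma autMatrixL9_mulVec_mulL9 (α β : ℂ) (x y : Fin 3 → ℂ) :
    autMatrixL9 α β *ᵥ mulL9 x y = mulL9 (autMatrixL9 α β *ᵥ x) (autMatrixL9 α β *ᵥ y) := by
  simp only [autMatrixL9_mulVec]
  funext i; fin_cases i <;> simp [mulL9] <;> ring

lemma autMatrixL9_mulVec_axis {a : Fin 3 → ℂ} (h2 : a 2 ≠ 0) :
    autMatrixL9 (a 0 / a 2) (a 1 / a 2) *ᵥ ![0, 0, a 2] = a := by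
  rw [autMatrixL9_mulVec]
  funext i; fin_cases i <;> simp [h2]

lemma eval_eq_eval_axis_of_autMatrixL9_invariant {f : MvPolynomial (Fin 3) ℂ}
    (hf : ∀ α β, 1 + α ≠ 0 → ∀ a, eval (autMatrixL9 α β *ᵥ a) f = eval a f)
    {a : Fin 3 → ℂ} (h2 : a 2 ≠ 0) (h02 : a 0 + a 2 ≠ 0) :
    eval a f = eval ![0, 0, a 2] f := by
  have hα : 1 + a 0 / a 2 ≠ 0 := by
    rwa [one_add_div h2, add_comm, div_ne_zero_iff, and_iff_left h2]
  rw [← hf _ (a 1 / a 2) hα ![0, 0, a 2], autMatrixL9_mulVec_axis h2]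

/-- For `m = 1`, a polynomial function on `L₉` (with coordinates `x = X 0`, `y = X 1`,
`z = X 2` w.r.t. the basis `(e₁,e₂,e₃)`) is invariant under all automorphisms of `L₉`
iff it is a polynomial in the third coordinate `z`; i.e. `I₁(L₉) = ℂ[z]`. -/
theorem L9_invariants_one_variable (f : MvPolynomial (Fin 3) ℂ) :
    (∀ g : (Fin 3 → ℂ) →ₗ[ℂ] (Fin 3 → ℂ),
        Function.Bijective g →
        (∀ x y : Fin 3 → ℂ, g (mulL9 x y) = mulL9 (g x) (g y)) →
        ∀ a : Fin 3 → ℂ, MvPolynomial.eval (g a) f = MvPolynomial.eval a f) ↔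
    ∃ q : Polynomial ℂ, f = Polynomial.aeval (MvPolynomial.X 2 : MvPolynomial (Fin 3) ℂ) q := by
  constructor
  · intro hinv
    have hf : ∀ α β, 1 + α ≠ 0 → ∀ a, eval (autMatrixL9 α β *ᵥ a) f = eval a f :=
      fun α β hα => hinv (autMatrixL9 α β).mulVecLin (bijective_autMatrixL9_mulVec β hα)
        (autMatrixL9_mulVec_mulL9 α β)
    refine ⟨aeval ![0, 0, Polynomial.X] f, sub_eq_zero.mp ?_⟩
    refine eq_zero_of_eval_eq_zero_of_eval_ne_zero (G := X 2 * (X 0 + X 2)) ?_ fun a ha => ?_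
    · intro h0
      simpa using congrArg (eval ![1, 0, 1]) h0
    · simp only [map_mul, map_add, eval_X, ne_eq, mul_eq_zero, not_or] at ha
      obtain ⟨h2, h02⟩ := ha
      rw [map_sub, eval_polynomial_aeval_X, polynomial_eval_aeval,
        eval_eq_eval_axis_of_autMatrixL9_invariant hf h2 h02, sub_eq_zero]
      congr 2
      funext i; fin_cases i <;> simp
  · rintro ⟨q, rfl⟩ g hbij hmul a
    rw [eval_polynomial_aeval_X, eval_polynomial_aeval_X, apply_two_of_map_mulL9 hmul,
      apply_two_e3_of_map_mulL9 hmul hbij.1, mul_one]
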